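/- Let μ_ρ be the probability measure on ℝ given as the pushforward of uniform measure on [0,2π] under x ↦ 1 + ρ² - 2ρ cos x, with ρ ∈ (-1,1), ρ ≠ 0. Then for any z < (1-|ρ|)², the Stieltjes transform ∫ 1/(z-x) dμ_ρ(x) equals -1/sqrt((z - (1-|ρ|)²)(z - (1+|ρ|)²)). -/

import Mathlib

open Real MeasureTheory

/-- The measure `μ_ρ`: pushforward of the uniform probability measure on `[0, 2π]`
under `x ↦ 1 + ρ² - 2ρ cos x`. -/
noncomputable def muRho (ρ : ℝ) : Measure ℝ :=
  Measure.map (fun x => 1 + ρ ^ 2 - 2 * ρ * Real.cos x)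
    ((ENNReal.ofReal (2 * π))⁻¹ • volume.restrict (Set.Icc (0:ℝ) (2 * π)))

/-- The basic improper integral `∫₀^∞ dt/(A+Bt²) = π/(2√(AB))`. -/
lemma aux_int_Ioi (A B : ℝ) (hA : 0 < A) (hB : 0 < B) :
    ∫ t in Set.Ioi (0:ℝ), (A + B * t ^ 2)⁻¹ = π / (2 * Real.sqrt (A * B)) := by
  set c : ℝ := Real.sqrt (A / B) with hc_def
  have hc : 0 < c := Real.sqrt_pos.mpr (div_pos hA hB)
  have hc2 : c ^ 2 = A / B := Real.sq_sqrt (div_pos hA hB).le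
  clear_value c
  have hBc : B * c = Real.sqrt (A * B) := by
    have h1 : (B * c) ^ 2 = A * B := by
      rw [mul_pow, hc2]; field_simp
    rw [← h1, Real.sqrt_sq (by positivity)]
  have hderiv : ∀ t ∈ Set.Ici (0:ℝ),
      HasDerivAt (fun t => (1 / (B * c)) * Real.arctan (t / c)) ((A + B * t ^ 2)⁻¹) t := by
    intro t _
    have h1 : HasDerivAt (fun t : ℝ => t / c) (1 / c) t := by
      simpa using (hasDerivAt_id t).div_const c
    have h2 := (Real.hasDerivAt_arctan (t / c)).comp t h1
    have h3 := h2.const_mul (1 / (B * c))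
    refine h3.congr_deriv ?_
    have hc2' : B * c ^ 2 = A := by rw [hc2]; field_simp
    have h4 : A + B * t ^ 2 = B * c ^ 2 * (1 + (t / c) ^ 2) := by
      have hc0 := hc.ne'
      rw [div_pow, mul_add, mul_one, hc2']
      congr 1
      field_simp
      rw [← hc2']; ring
    rw [h4]
    field_simp
  have hpos : ∀ t ∈ Set.Ioi (0:ℝ), 0 ≤ (A + B * t ^ 2)⁻¹ := by
    intro t _; positivity
  have htend : Filter.Tendsto (fun t => (1 / (B * c)) * Real.arctan (t / c))
      Filter.atTop (nhds ((1 / (B * c)) * (π / 2))) := by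
    apply Filter.Tendsto.const_mul
    have h1 : Filter.Tendsto (fun t : ℝ => t / c) Filter.atTop Filter.atTop :=
      Filter.tendsto_id.atTop_div_const hc
    exact (Real.tendsto_arctan_atTop.mono_right nhdsWithin_le_nhds).comp h1
  have := integral_Ioi_of_hasDerivAt_of_nonneg' hderiv hpos htend
  rw [this]
  simp only [zero_div, Real.arctan_zero, mul_zero, sub_zero]
  rw [← hBc]
  ring

/-- The half-period integral via the Weierstrass substitution. -/
lemma aux_int_half (p q : ℝ) (hpq : p + |q| < 0) :
    ∫ x in (0:ℝ)..π, (p + q * Real.cos x)⁻¹ = -π / Real.sqrt (p ^ 2 - q ^ 2) := by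
  have hq1 : q ≤ |q| := le_abs_self q
  have hq2 : -q ≤ |q| := neg_le_abs q
  set A : ℝ := -(p + q) with hA_def
  set B : ℝ := -(p - q) with hB_def
  have hA : 0 < A := by simp only [hA_def]; linarith
  have hB : 0 < B := by simp only [hB_def]; linarith
  clear_value A B
  -- image of the substitution
  have himg : (fun t : ℝ => 2 * Real.arctan t) '' Set.Ioi 0 = Set.Ioo 0 π := by
    ext x
    simp only [Set.mem_image, Set.mem_Ioi, Set.mem_Ioo]
    constructor
    · rintro ⟨t, ht, rfl⟩
      have h1 : 0 < Real.arctan t := by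
        have := Real.arctan_strictMono ht
        simpa using this
      have h2 : Real.arctan t < π / 2 := Real.arctan_lt_pi_div_two t
      constructor <;> linarith
    · rintro ⟨h1, h2⟩
      have hpi := Real.pi_pos
      refine ⟨Real.tan (x / 2),
        Real.tan_pos_of_pos_of_lt_pi_div_two (by linarith) (by linarith), ?_⟩
      rw [Real.arctan_tan (by linarith) (by linarith)]
      ring
  have hderiv : ∀ t ∈ Set.Ioi (0:ℝ),
      HasDerivWithinAt (fun t : ℝ => 2 * Real.arctan t) (2 * (1 + t ^ 2)⁻¹) (Set.Ioi 0) t := by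
    intro t _
    exact ((Real.hasDerivAt_arctan' t).const_mul 2).hasDerivWithinAt
  have hinj : Set.InjOn (fun t : ℝ => 2 * Real.arctan t) (Set.Ioi 0) := by
    intro a _ b _ hab
    have : Real.arctan a = Real.arctan b := by
      simp only at hab; linarith
    exact Real.arctan_injective this
  have hchg := integral_image_eq_integral_abs_deriv_smul measurableSet_Ioi hderiv hinj
    (fun x => (p + q * Real.cos x)⁻¹)
  rw [himg] at hchg
  have hptw : ∀ t : ℝ, |2 * (1 + t ^ 2)⁻¹| • (p + q * Real.cos (2 * Real.arctan t))⁻¹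
      = (-2) * (A + B * t ^ 2)⁻¹ := by
    intro t
    have h1 : (0:ℝ) < 1 + t ^ 2 := by positivity
    have hcos : Real.cos (2 * Real.arctan t) = 2 * (1 / (1 + t ^ 2)) - 1 := by
      rw [Real.cos_two_mul, Real.cos_sq_arctan]
    have hABt : 0 < A + B * t ^ 2 := by positivity
    have hden : p + q * (2 * (1 / (1 + t ^ 2)) - 1) = -(A + B * t ^ 2) / (1 + t ^ 2) := by
      simp only [hA_def, hB_def]
      field_simp
      ring
    rw [hcos, hden, smul_eq_mul, abs_of_pos (by positivity), inv_div,
      div_eq_mul_inv, inv_neg]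
    rw [show 2 * (1 + t ^ 2)⁻¹ * ((1 + t ^ 2) * -(A + B * t ^ 2)⁻¹)
        = ((1 + t ^ 2)⁻¹ * (1 + t ^ 2)) * (-2 * (A + B * t ^ 2)⁻¹) by ring]
    rw [inv_mul_cancel₀ h1.ne', one_mul]
  have hIoo : ∫ x in Set.Ioo (0:ℝ) π, (p + q * Real.cos x)⁻¹
      = ∫ t in Set.Ioi (0:ℝ), (-2) * (A + B * t ^ 2)⁻¹ := by
    rw [hchg]
    exact setIntegral_congr_fun measurableSet_Ioi (fun t _ => hptw t)
  have hAB : A * B = p ^ 2 - q ^ 2 := by simp only [hA_def, hB_def]; ring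
  rw [intervalIntegral.integral_of_le Real.pi_pos.le, integral_Ioc_eq_integral_Ioo, hIoo,
    integral_const_mul, aux_int_Ioi A B hA hB, hAB]
  have hS : 0 < Real.sqrt (p ^ 2 - q ^ 2) := by
    apply Real.sqrt_pos.mpr
    nlinarith [abs_nonneg q, sq_abs q]
  field_simp

/-- Full-period integral. -/
lemma aux_int_full (p q : ℝ) (hpq : p + |q| < 0) :
    ∫ x in (0:ℝ)..(2 * π), (p + q * Real.cos x)⁻¹ = -(2 * π) / Real.sqrt (p ^ 2 - q ^ 2) := by
  have hne : ∀ x : ℝ, p + q * Real.cos x ≠ 0 := by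
    intro x
    have h1 : q * Real.cos x ≤ |q| := by
      calc q * Real.cos x ≤ |q * Real.cos x| := le_abs_self _
        _ = |q| * |Real.cos x| := abs_mul _ _
        _ ≤ |q| * 1 := by
            exact mul_le_mul_of_nonneg_left (Real.abs_cos_le_one x) (abs_nonneg q)
        _ = |q| := mul_one _
    intro h; linarith
  have hcont : Continuous fun x => (p + q * Real.cos x)⁻¹ :=
    (continuous_const.add (continuous_const.mul Real.continuous_cos)).inv₀ hne
  have hint : ∀ a b : ℝ, IntervalIntegrable (fun x => (p + q * Real.cos x)⁻¹) volume a b :=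
    fun a b => hcont.intervalIntegrable a b
  have hsplit := intervalIntegral.integral_add_adjacent_intervals (hint 0 π) (hint π (2 * π))
  have hsecond : (∫ x in π..(2 * π), (p + q * Real.cos x)⁻¹)
      = ∫ x in (0:ℝ)..π, (p + q * Real.cos x)⁻¹ := by
    have h1 := intervalIntegral.integral_comp_sub_left (a := 0) (b := π)
      (fun x => (p + q * Real.cos x)⁻¹) (2 * π)
    have h2 : (2 * π) - π = π := by ring
    have h3 : (2 * π) - 0 = 2 * π := by ring
    rw [h2, h3] at h1
    rw [← h1]
    congr 1
    funext x
    rw [show (2 : ℝ) * π - x = 2 * π + (-x) by ring, Real.cos_add]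
    simp
  rw [← hsplit, hsecond, aux_int_half p q hpq]
  ring

/-- For `z < (1-|ρ|)²`, the Stieltjes transform of `μ_ρ` equals
`-1/√((z-(1-|ρ|)²)(z-(1+|ρ|)²))`. -/
theorem stmt_5 (ρ : ℝ) (hρ₁ : -1 < ρ) (hρ₂ : ρ < 1) (hρ₀ : ρ ≠ 0)
    (z : ℝ) (hz : z < (1 - |ρ|) ^ 2) :
    ∫ x, (z - x)⁻¹ ∂(muRho ρ)
      = -1 / Real.sqrt ((z - (1 - |ρ|) ^ 2) * (z - (1 + |ρ|) ^ 2)) := by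
  have hπ : (0:ℝ) < 2 * π := by positivity
  set p : ℝ := z - 1 - ρ ^ 2 with hp_def
  set q : ℝ := 2 * ρ with hq_def
  have habs : |ρ| ^ 2 = ρ ^ 2 := sq_abs ρ
  have hpq : p + |q| < 0 := by
    have h1 : |q| = 2 * |ρ| := by rw [hq_def, abs_mul]; simp
    rw [h1, hp_def]
    nlinarith [sq_abs ρ]
  have hmap : AEMeasurable (fun x : ℝ => 1 + ρ ^ 2 - 2 * ρ * Real.cos x)
      ((ENNReal.ofReal (2 * π))⁻¹ • volume.restrict (Set.Icc (0:ℝ) (2 * π))) :=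
    ((continuous_const.sub (continuous_const.mul Real.continuous_cos))).aemeasurable
  have hsm : AEStronglyMeasurable (fun x : ℝ => (z - x)⁻¹) (muRho ρ) :=
    (measurable_const.sub measurable_id).inv.aestronglyMeasurable
  rw [muRho] at hsm ⊢
  rw [integral_map hmap hsm]
  rw [integral_smul_measure]
  have htr : ((ENNReal.ofReal (2 * π))⁻¹).toReal = (2 * π)⁻¹ := by
    rw [ENNReal.toReal_inv, ENNReal.toReal_ofReal hπ.le]
  rw [htr]
  have hfun : (fun x : ℝ => (z - (1 + ρ ^ 2 - 2 * ρ * Real.cos x))⁻¹)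
      = fun x : ℝ => (p + q * Real.cos x)⁻¹ := by
    funext x
    rw [hp_def, hq_def]
    ring_nf
  have hint : (∫ x in Set.Icc (0:ℝ) (2 * π), (z - (1 + ρ ^ 2 - 2 * ρ * Real.cos x))⁻¹)
      = ∫ x in (0:ℝ)..(2 * π), (p + q * Real.cos x)⁻¹ := by
    rw [integral_Icc_eq_integral_Ioc, ← intervalIntegral.integral_of_le hπ.le]
    exact intervalIntegral.integral_congr (fun x _ => congrFun hfun x)
  rw [hint, aux_int_full p q hpq]
  have hprod : p ^ 2 - q ^ 2 = (z - (1 - |ρ|) ^ 2) * (z - (1 + |ρ|) ^ 2) := by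
    rw [hp_def, hq_def]
    linear_combination (2 * z + 2 - ρ ^ 2 - |ρ| ^ 2) * habs
  rw [hprod]
  have hS : 0 < Real.sqrt ((z - (1 - |ρ|) ^ 2) * (z - (1 + |ρ|) ^ 2)) := by
    apply Real.sqrt_pos.mpr
    rw [← hprod]
    nlinarith [abs_nonneg q, sq_abs q]
  rw [smul_eq_mul]
  field_simp
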